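/- Let (sₙ) be the summing basis of c₀, i.e., sₙ = x₁ + ⋯ + xₙ where (xₙ) is the canonical unit vector basis of c₀. Then for every N ≥ 1, the vector-valued trigonometric polynomial f(t) = Σₙ₌₁ᴺ s₂ₙ e^{i2ⁿt} satisfies (∫₀^{2π} ‖f(t)‖²_{c₀} dt/2π)^{1/2} ≥ N^{1/2}. -/

import Mathlib

/-!
Every `s (2 * n)` has first coordinate `1`, so `‖f t‖` dominates `|∑ₙ e^{i 2ⁿ t}|`. The
frequencies `2ⁿ` are distinct, so by Parseval the mean of `|∑ₙ e^{i 2ⁿ t}|²` over a period is `N`.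
-/

open Real Finset ComplexConjugate
open scoped ENNReal

theorem integral_exp_I_mul_intCast_mul (k : ℤ) :
    ∫ t in (0:ℝ)..2 * π, Complex.exp (Complex.I * k * t) = if k = 0 then (2 * π : ℂ) else 0 := by
  split_ifs with hk
  · simp [hk]
  · have hc : Complex.I * k ≠ 0 := mul_ne_zero Complex.I_ne_zero (Int.cast_ne_zero.2 hk)
    have hperiod : Complex.exp (Complex.I * k * (2 * π)) = 1 := by
      rw [← Complex.exp_int_mul_two_pi_mul_I k]
      ring_nf
    simp [integral_exp_mul_complex hc, hperiod]

theorem integral_norm_sq_sum_mul_exp_I_mul_intCast {ι : Type*} (S : Finset ι) (c : ι → ℂ)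
    (k : ι → ℤ) (hk : Set.InjOn k S) :
    ∫ t in (0:ℝ)..2 * π, ‖∑ n ∈ S, c n * Complex.exp (Complex.I * k n * t)‖ ^ 2
      = 2 * π * ∑ n ∈ S, ‖c n‖ ^ 2 := by
  set e : ι → ι → ℝ → ℂ := fun n m t =>
    c n * conj (c m) * Complex.exp (Complex.I * (k n - k m : ℤ) * t)
  have hexpand : ∀ t : ℝ,
      ((‖∑ n ∈ S, c n * Complex.exp (Complex.I * k n * t)‖ ^ 2 : ℝ) : ℂ)
        = ∑ n ∈ S, ∑ m ∈ S, e n m t := by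
    intro t
    rw [Complex.ofReal_pow, ← Complex.mul_conj', map_sum, sum_mul_sum]
    refine sum_congr rfl fun n _ => sum_congr rfl fun m _ => ?_
    rw [map_mul, ← Complex.exp_conj, mul_mul_mul_comm, ← Complex.exp_add]
    simp only [e, map_mul, Complex.conj_I, Complex.conj_ofReal, map_intCast]
    push_cast
    ring_nf
  have hcont : ∀ n m, Continuous (e n m) := fun n m => by fun_prop
  have hdiag : ∀ n ∈ S, ∑ m ∈ S, c n * conj (c m) * (if k n - k m = 0 then (2 * π : ℂ) else 0)
      = ‖c n‖ ^ 2 * (2 * π) := fun n hn => by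
    rw [sum_eq_single_of_mem n hn, sub_self, if_pos rfl, Complex.mul_conj']
    intro m hm hmn
    rw [if_neg (sub_ne_zero.2 fun h => hmn (hk hn hm h).symm), mul_zero]
  apply Complex.ofReal_injective
  rw [← intervalIntegral.integral_ofReal, intervalIntegral.integral_congr fun t _ => hexpand t,
    intervalIntegral.integral_finsetSum fun n _ =>
      (continuous_finsetSum S fun m _ => hcont n m).intervalIntegrable _ _]
  simp_rw [intervalIntegral.integral_finsetSum fun m _ => (hcont _ m).intervalIntegrable _ _, e,
    intervalIntegral.integral_const_mul, integral_exp_I_mul_intCast_mul]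
  rw [sum_congr rfl hdiag, ← sum_mul]
  push_cast
  ring

theorem lp.sum_single_apply {α E : Type*} [NormedAddCommGroup E] [DecidableEq α] (p : ℝ≥0∞)
    (s : Finset α) (a : E) (i : α) :
    (∑ k ∈ s, lp.single p k a : lp (fun _ : α => E) p) i = if i ∈ s then a else 0 := by
  rw [lp.coeFn_sum, Finset.sum_apply]
  simp [Pi.single_apply]

theorem summing_basis_lower_bound_general (N : ℕ) :
    let x : ℕ → lp (fun _ : ℕ => ℂ) ∞ := fun k => lp.single ∞ k 1
    let s : ℕ → lp (fun _ : ℕ => ℂ) ∞ := fun n => ∑ k ∈ Finset.Icc 1 n, x k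
    let f : ℝ → lp (fun _ : ℕ => ℂ) ∞ := fun t =>
      ∑ n ∈ Finset.Icc 1 N, Complex.exp (Complex.I * 2 ^ n * (t : ℂ)) • s (2 * n)
    Real.sqrt N ≤ Real.sqrt ((1 / (2 * π)) * ∫ t in (0:ℝ)..(2 * π), ‖f t‖ ^ 2) := by
  intro x s f
  have hfirst : ∀ t : ℝ,
      f t 1 = ∑ n ∈ Icc 1 N, 1 * Complex.exp (Complex.I * ((2 ^ n : ℕ) : ℤ) * t) := by
    intro t
    rw [lp.coeFn_sum, Finset.sum_apply]
    refine sum_congr rfl fun n hn => ?_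
    rw [lp.coeFn_smul, Pi.smul_apply, lp.sum_single_apply,
      if_pos (mem_Icc.2 ⟨le_rfl, by grind⟩)]
    push_cast
    ring
  have hfreq : Set.InjOn (fun n : ℕ => ((2 ^ n : ℕ) : ℤ)) (Icc 1 N) :=
    (Nat.cast_injective.comp (Nat.pow_right_injective le_rfl)).injOn
  have hf : Continuous f := by fun_prop
  have hcoord : ∀ t, ‖f t 1‖ ^ 2 ≤ ‖f t‖ ^ 2 := fun t =>
    pow_le_pow_left₀ (norm_nonneg _) (lp.norm_apply_le_norm ENNReal.top_ne_zero _ _) 2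
  have hmono : ∫ t in (0:ℝ)..2 * π, ‖f t 1‖ ^ 2 ≤ ∫ t in (0:ℝ)..2 * π, ‖f t‖ ^ 2 := by
    refine intervalIntegral.integral_mono_on (by positivity) ?_
      ((hf.norm.pow 2).intervalIntegrable _ _) fun t _ => hcoord t
    simp_rw [hfirst]
    exact (by fun_prop : Continuous _).norm.pow 2 |>.intervalIntegrable _ _
  simp_rw [hfirst, integral_norm_sq_sum_mul_exp_I_mul_intCast _ _ _ hfreq] at hmono
  refine Real.sqrt_le_sqrt ?_
  rw [one_div, inv_mul_eq_div, le_div_iff₀ (by positivity)]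
  simpa [mul_comm] using hmono

/-- With `(xₙ)` the canonical basis of `c₀` (realized inside `ℓ∞`, where the
norm agrees with the `c₀` norm) and `sₙ = x₁ + ⋯ + xₙ` the summing basis, for every
`N ≥ 1` the trigonometric polynomial `f(t) = Σ_{n=1}^N s_{2n} e^{i 2^n t}` satisfies
`(∫₀^{2π} ‖f(t)‖² dt / 2π)^{1/2} ≥ N^{1/2}`. -/
theorem summing_basis_lower_bound (N : ℕ) (hN : 1 ≤ N) :
    let x : ℕ → lp (fun _ : ℕ => ℂ) ∞ := fun k => lp.single ∞ k 1
    let s : ℕ → lp (fun _ : ℕ => ℂ) ∞ := fun n => ∑ k ∈ Finset.Icc 1 n, x k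
    let f : ℝ → lp (fun _ : ℕ => ℂ) ∞ := fun t =>
      ∑ n ∈ Finset.Icc 1 N, Complex.exp (Complex.I * 2 ^ n * (t : ℂ)) • s (2 * n)
    Real.sqrt N ≤ Real.sqrt ((1 / (2 * π)) * ∫ t in (0:ℝ)..(2 * π), ‖f t‖ ^ 2) :=
  summing_basis_lower_bound_general N
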